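/- Let (Γ,μ) be a weighted graph satisfying (p0) and (VD), and let F∈W0 be such that the diagonal upper estimate DUE(F) holds. Then there is a C>0 such that for all x∈Γ and R>0, ρ(x,R,2R)·v(x,R,2R) ≤ C·F(x,2R). -/
import Mathlib


open scoped Classical BigOperators

noncomputable section

/-- A weighted graph: a countable infinite connected graph with symmetric
positive edge weights on edges. -/
structure WGraph (Γ : Type*) where
  adj : Γ → Γ → Prop
  adj_symm : ∀ x y, adj x y → adj y x
  w : Γ → Γ → ℝ
  w_symm : ∀ x y, w x y = w y x
  w_pos : ∀ x y, adj x y → 0 < w x y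
  w_zero : ∀ x y, ¬ adj x y → w x y = 0
  connected : ∀ x y, Relation.ReflTransGen adj x y
  inf : Infinite Γ
  cnt : Countable Γ

namespace WGraph

variable {Γ : Type*}

/-- n-fold adjacency: there is a path of length n. -/
def adjN (G : WGraph Γ) : ℕ → Γ → Γ → Prop
  | 0 => fun x y => x = y
  | (n+1) => fun x y => ∃ z, G.adj x z ∧ adjN G n z y

variable (G : WGraph Γ)

/-- μ(x) = Σ_{y} μ_{x,y}. -/
def vtx (x : Γ) : ℝ := ∑' y, G.w x y

/-- μ(A) for a set of vertices. -/
def setVol (A : Set Γ) : ℝ := ∑' y : A, G.vtx y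

/-- graph (shortest path) distance. -/
def dist (x y : Γ) : ℕ := sInf {n | G.adjN n x y}

/-- open metric ball B(x,r). -/
def ball (x : Γ) (r : ℝ) : Set Γ := {y | (G.dist x y : ℝ) < r}

/-- V(x,r) = μ(B(x,r)). -/
def vol (x : Γ) (r : ℝ) : ℝ := G.setVol (G.ball x r)

/-- one-step transition probability P(x,y) = μ_{xy}/μ(x). -/
def kerP (x y : Γ) : ℝ := G.w x y / G.vtx x

/-- n-step transition probability of the walk killed outside A. -/
def killedP (G : WGraph Γ) (A : Set Γ) : ℕ → Γ → Γ → ℝ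
  | 0 => fun x y => if x = y ∧ x ∈ A then 1 else 0
  | (n+1) => fun x y => if x ∈ A then ∑' z, G.kerP x z * killedP G A n z y else 0

/-- P_n(x,y). -/
def transP (n : ℕ) (x y : Γ) : ℝ := G.killedP Set.univ n x y

/-- heat kernel p_n(x,y) = P_n(x,y)/μ(y). -/
def hk (n : ℕ) (x y : Γ) : ℝ := G.transP n x y / G.vtx y

/-- p̃_n = p_n + p_{n+1}. -/
def hkt (n : ℕ) (x y : Γ) : ℝ := G.hk n x y + G.hk (n+1) x y

/-- Dirichlet heat kernel p_n^A. -/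
def hkA (A : Set Γ) (n : ℕ) (x y : Γ) : ℝ := G.killedP A n x y / G.vtx y

/-- p̃_n^A = p_n^A + p_{n+1}^A. -/
def hktA (A : Set Γ) (n : ℕ) (x y : Γ) : ℝ := G.hkA A n x y + G.hkA A (n+1) x y

/-- local Green function G^A(x,y) = Σ_k P_k^A(x,y). -/
def greenF (A : Set Γ) (x y : Γ) : ℝ := ∑' n, G.killedP A n x y

/-- local Green kernel g^A(x,y) = G^A(x,y)/μ(y). -/
def greenK (A : Set Γ) (x y : Γ) : ℝ := G.greenF A x y / G.vtx y

/-- mean exit time E_x(A) = Σ_{y∈A} G^A(x,y). -/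
def exitE (A : Set Γ) (x : Γ) : ℝ := ∑' y : A, G.greenF A x y

/-- E(x,r) = E_x(B(x,r)). -/
def meanE (x : Γ) (r : ℝ) : ℝ := G.exitE (G.ball x r) x

/-- the mean exit time as a function Γ × ℕ → ℝ. -/
def EF : Γ → ℕ → ℝ := fun x R => G.meanE x (R : ℝ)

/-- Ē(x,r) = max_{y ∈ B(x,r)} E_y(B(x,r)). -/
def maxE (x : Γ) (r : ℝ) : ℝ :=
  sSup {e | ∃ y ∈ G.ball x r, e = G.exitE (G.ball x r) y}

/-- Markov operator P. -/
def Pop (u : Γ → ℝ) (x : Γ) : ℝ := ∑' y, G.kerP x y * u y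

/-- Markov operator of the killed walk. -/
def PopB (B : Set Γ) (u : Γ → ℝ) (x : Γ) : ℝ :=
  ∑' y, if y ∈ B then G.kerP x y * u y else 0

/-- Dirichlet Laplacian Δ^B = P^B - I. -/
def lapB (B : Set Γ) (u : Γ → ℝ) (x : Γ) : ℝ := G.PopB B u x - u x

/-- Dirichlet form E(f,f). -/
def dform (f : Γ → ℝ) : ℝ :=
  (1/2) * ∑' p : Γ × Γ, G.w p.1 p.2 * (f p.1 - f p.2)^2

/-- effective resistance between disjoint sets. -/
def res (A B : Set Γ) : ℝ :=
  (sInf {e | ∃ f : Γ → ℝ, (∀ x ∈ A, f x = 1) ∧ (∀ x ∈ B, f x = 0) ∧ e = G.dform f})⁻¹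

/-- ρ(x,r,R), resistance of the annulus. -/
def resA (x : Γ) (r R : ℝ) : ℝ := G.res (G.ball x r) (G.ball x R)ᶜ

/-- v(x,r,R) = V(x,R) - V(x,r). -/
def volA (x : Γ) (r R : ℝ) : ℝ := G.vol x R - G.vol x r

/-- smallest Dirichlet eigenvalue λ(A) of -Δ^A. -/
def lam (A : Set Γ) : ℝ :=
  sInf {e | ∃ f : Γ → ℝ, f ≠ 0 ∧ (∀ x ∉ A, f x = 0) ∧
        e = G.dform f / (∑' x, (f x)^2 * G.vtx x)}

/-- Σ_{y∈A} v(y) μ(y). -/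
def wsum (A : Set Γ) (v : Γ → ℝ) : ℝ := ∑' y : A, v y * G.vtx y

/-- space-time sum Σ_{a ≤ i ≤ b} Σ_{y∈A} u_i(y) μ(y). -/
def stsum (A : Set Γ) (a b : ℝ) (u : ℕ → Γ → ℝ) : ℝ :=
  ∑' i : ℕ, if a ≤ (i:ℝ) ∧ (i:ℝ) ≤ b then G.wsum A (u i) else 0

/-! ### Conditions -/

/-- (p0): controlled weights. -/
def p0cond : Prop := ∃ p > (0:ℝ), ∀ x y, G.adj x y → p ≤ G.kerP x y

/-- (VD): volume doubling. -/
def VD : Prop := ∃ D > (0:ℝ), ∀ (x : Γ) (R : ℝ), 0 < R → G.vol x (2*R) ≤ D * G.vol x R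

/-- u is harmonic on A. -/
def harmOn (u : Γ → ℝ) (A : Set Γ) : Prop := ∀ x ∈ A, G.Pop u x = u x

/-- (H): elliptic Harnack inequality. -/
def EH : Prop := ∃ C > (0:ℝ), ∀ (x : Γ) (R : ℕ), 0 < R →
  ∀ u : Γ → ℝ, (∀ y, 0 ≤ u y) → G.harmOn u (G.ball x (2*(R:ℝ))) →
    ∀ y ∈ G.ball x (R:ℝ), ∀ z ∈ G.ball x (R:ℝ), u y ≤ C * u z

/-- (wTC): weak time comparison principle. -/
def wTC : Prop := ∃ C > (1:ℝ), ∀ (x y : Γ) (R : ℕ), 0 < R → G.dist x y < R →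
  G.meanE x (R:ℝ) ≤ C * G.meanE y (R:ℝ)

/-- (TC): time comparison principle. -/
def TC : Prop := ∃ C > (1:ℝ), ∀ (x y : Γ) (R : ℕ), 0 < R → G.dist x y < R →
  G.meanE x (2*(R:ℝ)) ≤ C * G.meanE y (R:ℝ)

/-- (ER): the Einstein relation E(x,2R) ≃ ρ(x,R,2R)v(x,R,2R). -/
def ER : Prop := ∃ C > (1:ℝ), ∀ (x : Γ) (R : ℕ), 0 < R →
  G.meanE x (2*(R:ℝ)) ≤ C * (G.resA x (R:ℝ) (2*(R:ℝ)) * G.volA x (R:ℝ) (2*(R:ℝ))) ∧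
  G.resA x (R:ℝ) (2*(R:ℝ)) * G.volA x (R:ℝ) (2*(R:ℝ)) ≤ C * G.meanE x (2*(R:ℝ))

/-- (aDρv): anti-doubling for the resistance-volume product. -/
def aDrv : Prop := ∃ c > (0:ℝ), ∃ b > (0:ℝ), ∀ (x : Γ) (r R : ℕ), 0 < r → r < R →
  c * ((R:ℝ)/(r:ℝ)) ^ b * (G.resA x (r:ℝ) (2*(r:ℝ)) * G.volA x (r:ℝ) (2*(r:ℝ)))
    ≤ G.resA x (R:ℝ) (2*(R:ℝ)) * G.volA x (R:ℝ) (2*(R:ℝ))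

/-- RLE(E): resistance lower estimate w.r.t. the mean exit time. -/
def RLE_E : Prop := ∃ c > (0:ℝ), ∀ (x : Γ) (R : ℕ), 0 < R →
  c * G.meanE x (2*(R:ℝ)) / G.vol x (2*(R:ℝ)) ≤ G.resA x (R:ℝ) (2*(R:ℝ))

/-- the two-sided regularity (w1) of a space-time scaling function,
with exponents β (upper) and β' (lower). -/
def W0reg (F : Γ → ℕ → ℝ) (β β' : ℝ) : Prop :=
  ∃ cF > (0:ℝ), ∃ CF > (0:ℝ), ∀ (x y : Γ) (R r : ℕ), 0 < r → r < R → G.dist x y < R →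
    cF * ((R:ℝ)/(r:ℝ)) ^ β' ≤ F x R / F y r ∧ F x R / F y r ≤ CF * ((R:ℝ)/(r:ℝ)) ^ β

/-- F ∈ W₀. -/
def memW0 (F : Γ → ℕ → ℝ) : Prop :=
  (∃ β > (1:ℝ), ∃ β' > (0:ℝ), G.W0reg F β β') ∧
  (∃ c > (0:ℝ), ∀ (x : Γ) (R : ℕ), c * (R:ℝ)^2 ≤ F x R) ∧
  (∀ (x : Γ) (R : ℕ), F x R + 1 ≤ F x (R+1))

/-- F ∈ W₁ (β' > 1). -/
def memW1 (F : Γ → ℕ → ℝ) : Prop :=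
  (∃ β > (1:ℝ), ∃ β' > (1:ℝ), G.W0reg F β β') ∧
  (∃ c > (0:ℝ), ∀ (x : Γ) (R : ℕ), c * (R:ℝ)^2 ≤ F x R) ∧
  (∀ (x : Γ) (R : ℕ), F x R + 1 ≤ F x (R+1))

/-- generalized inverse f(x,n) = min{R ∈ ℕ : F(x,R) ≥ n}. -/
def invF' (F : Γ → ℕ → ℝ) (x : Γ) (n : ℕ) : ℕ := sInf {R : ℕ | (n:ℝ) ≤ F x R}

/-- g(F): two-sided bound for the Green kernel on annuli. -/
def gF (F : Γ → ℕ → ℝ) : Prop :=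
  ∃ c > (0:ℝ), ∃ C > (0:ℝ), ∀ (x : Γ) (R : ℕ), 0 < R → ∀ y : Γ,
    y ∈ G.ball x (R:ℝ) → y ∉ G.ball x ((R:ℝ)/2) →
      G.greenK (G.ball x (2*(R:ℝ))) x y ≤ C * F x (2*R) / G.vol x (2*(R:ℝ)) ∧
      c * F x (2*R) / G.vol x (2*(R:ℝ)) ≤ G.greenK (G.ball x (2*(R:ℝ))) x y

/-- DUE(F): diagonal upper estimate. -/
def DUE (F : Γ → ℕ → ℝ) : Prop :=
  ∃ C > (0:ℝ), ∀ (x : Γ) (n : ℕ), 0 < n → G.hk n x x ≤ C / G.vol x (invF' F x n : ℝ)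

/-- UE(F): (sub-Gaussian) heat kernel upper estimate. -/
def UE (F : Γ → ℕ → ℝ) : Prop :=
  ∃ C > (1:ℝ), ∃ β > (1:ℝ), ∃ c > (0:ℝ), ∀ (x y : Γ) (n : ℕ), 0 < n →
    G.hk n x y ≤ C / G.vol x (invF' F x n : ℝ) *
      Real.exp (-(c * (F x (G.dist x y) / n) ^ (1/(β-1))))

/-- PLE(F): particular lower estimate for the Dirichlet heat kernel. -/
def PLE (F : Γ → ℕ → ℝ) : Prop :=
  ∃ c δ ε : ℝ, 0 < c ∧ c < 1 ∧ 0 < δ ∧ δ < 1 ∧ 0 < ε ∧ ε < 1 ∧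
    ∀ (x : Γ) (R : ℕ), 0 < R → ∀ (n : ℕ) (y : Γ),
      (n:ℝ) ≤ ε * F x R →
      (G.dist x y : ℝ) < min (n:ℝ) (δ * (invF' F x n : ℝ)) →
        c / G.vol x (invF' F x n : ℝ) ≤ G.hktA (G.ball x (R:ℝ)) n x y

/-- NDLE(F): near diagonal lower estimate. -/
def NDLE (F : Γ → ℕ → ℝ) : Prop :=
  ∃ c > (0:ℝ), ∃ δ > (0:ℝ), ∀ (x y : Γ) (n : ℕ), 0 < n →
    (G.dist x y : ℝ) < min (δ * (invF' F x n : ℝ)) (n:ℝ) →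
      c / G.vol x (invF' F x n : ℝ) ≤ G.hkt n x y

/-- LE(F): off-diagonal lower estimate. -/
def LE (F : Γ → ℕ → ℝ) : Prop :=
  ∃ C > (1:ℝ), ∃ β' > (1:ℝ), ∃ c > (0:ℝ), ∀ (x y : Γ) (n : ℕ), G.dist x y ≤ n →
    c / G.vol x (invF' F x n : ℝ) *
        Real.exp (-(C * (F x (G.dist x y) / n) ^ (1/(β'-1))))
      ≤ G.hkt n x y

/-- u is a nonnegative Dirichlet sub-solution of the heat equation
on [0,T] × B. -/
def subSolOn (B : Set Γ) (T : ℝ) (u : ℕ → Γ → ℝ) : Prop :=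
  (∀ n y, 0 ≤ u n y) ∧
  ∀ (n : ℕ) (y : Γ), y ∈ B → (n:ℝ) < T → u (n+1) y - u n y ≤ G.lapB B (u n) y

/-- u is a nonnegative Dirichlet super-solution of the heat equation
on [0,T] × B. -/
def supSolOn (B : Set Γ) (T : ℝ) (u : ℕ → Γ → ℝ) : Prop :=
  (∀ n y, 0 ≤ u n y) ∧
  ∀ (n : ℕ) (y : Γ), y ∈ B → (n:ℝ) < T → G.lapB B (u n) y ≤ u (n+1) y - u n y

/-- PMV_δ(F) with constants c1 < c2 < c3 < c4 ≤ c5: parabolic mean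
value inequality. -/
def PMVd (F : Γ → ℕ → ℝ) (δ c1 c2 c3 c4 c5 : ℝ) : Prop :=
  ∃ C > (1:ℝ), ∀ (x : Γ) (R : ℕ), 0 < R →
    ∀ u : ℕ → Γ → ℝ, G.subSolOn (G.ball x (R:ℝ)) (c5 * F x R) u →
      ∀ (n : ℕ) (y : Γ), y ∈ G.ball x (δ * R) →
        c3 * F x R ≤ (n:ℝ) → (n:ℝ) ≤ c4 * F x R →
          u n y ≤ C / ((c2 - c1) * F x R * G.vol x (δ * R)) *
            G.stsum (G.ball x (δ * R)) (c1 * F x R) (c2 * F x R) u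

/-- PMV(F) = PMV_1(F) for all admissible constants. -/
def PMV (F : Γ → ℕ → ℝ) : Prop :=
  ∀ c1 c2 c3 c4 c5 : ℝ, 0 ≤ c1 → c1 < c2 → c2 < c3 → c3 < c4 → c4 ≤ c5 →
    G.PMVd F 1 c1 c2 c3 c4 c5

/-- PSMV(F): parabolic super mean value inequality. -/
def PSMV (F : Γ → ℕ → ℝ) : Prop :=
  ∃ ε : ℝ, 0 < ε ∧ ε < 1 ∧
    ∀ c1 c2 c3 c4 c5 : ℝ, 0 < c1 → c1 < c2 → c2 < c3 → c3 < c4 → c4 ≤ c5 →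
      c4 - c1 < ε →
      ∃ δ > (0:ℝ), ∃ c > (0:ℝ), ∀ (x : Γ) (R : ℕ), 0 < R →
        ∀ u : ℕ → Γ → ℝ, G.supSolOn (G.ball x (R:ℝ)) (c5 * F x R) u →
          ∀ (k : ℕ) (y : Γ), y ∈ G.ball x (δ * R) →
            c3 * F x R ≤ (k:ℝ) → (k:ℝ) ≤ c4 * F x R →
              c / ((c2 - c1) * F x R * G.vol x (δ * R)) *
                  G.stsum (G.ball x (δ * R)) (c1 * F x R) (c2 * F x R)
                    (fun i z => u i z + u (i+1) z)
                ≤ u k y + u (k+1) y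

/-- u solves the heat equation ∂ₙu = Δu on [a,b) × B. -/
def solOn (B : Set Γ) (a b : ℝ) (u : ℕ → Γ → ℝ) : Prop :=
  (∀ n y, 0 ≤ u n y) ∧
  ∀ (n : ℕ) (y : Γ), y ∈ B → a ≤ (n:ℝ) → (n:ℝ) < b → u (n+1) y = G.Pop (u n) y

/-- PH(F): parabolic Harnack inequality. -/
def PH (F : Γ → ℕ → ℝ) : Prop :=
  ∃ C > (0:ℝ), ∀ (x : Γ) (R k : ℕ), 0 < R →
    ∀ u : ℕ → Γ → ℝ, G.solOn (G.ball x (2*(R:ℝ))) (k:ℝ) ((k:ℝ) + F x R) u →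
      ∀ (nm np : ℕ) (xm xp : Γ), xm ∈ G.ball x (R:ℝ) → xp ∈ G.ball x (R:ℝ) →
        (k:ℝ) + F x R / 4 ≤ (nm:ℝ) → (nm:ℝ) ≤ (k:ℝ) + F x R / 2 →
        (k:ℝ) + 3 * F x R / 4 ≤ (np:ℝ) → (np:ℝ) < (k:ℝ) + F x R →
        (G.dist xm xp : ℝ) ≤ (np:ℝ) - (nm:ℝ) →
          u nm xm ≤ C * (u np xp + u (np+1) xp)

/-- (MV): elliptic mean value inequality. -/
def MV : Prop := ∃ C > (0:ℝ), ∀ (x : Γ) (R : ℕ), 0 < R →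
  ∀ u : Γ → ℝ, (∀ y, 0 ≤ u y) → G.harmOn u (G.ball x (R:ℝ)) →
    u x ≤ C / G.vol x (R:ℝ) * G.wsum (G.ball x (R:ℝ)) u

/-- the set of integers k eligible in the definition of the local
sub-Gaussian upper exponent k_x(n,R). -/
def kSet (F : Γ → ℕ → ℝ) (q : ℝ) (x : Γ) (n R : ℕ) : Set ℕ :=
  {k | 1 ≤ k ∧ ∀ y : Γ, G.dist x y < R → (n:ℝ)/(k:ℝ) ≤ q * F y (R / k)}

/-- k = k_x(n,R): the maximal eligible integer, or 1 if there is none. -/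
def isKexp (F : Γ → ℕ → ℝ) (q : ℝ) (x : Γ) (n R k : ℕ) : Prop :=
  (k ∈ G.kSet F q x n R ∧ ∀ j ∈ G.kSet F q x n R, j ≤ k) ∨
  (G.kSet F q x n R = ∅ ∧ k = 1)

/-- the set of integers l eligible in the definition of l_x(n,R). -/
def lSet' (F : Γ → ℕ → ℝ) (Cl : ℝ) (x : Γ) (n R : ℕ) : Set ℕ :=
  {l | 1 ≤ l ∧ l ≤ n ∧ Cl * F x ((R + l - 1) / l) ≤ (n:ℝ)/(l:ℝ)}

/-- l = l_x(n,R): the minimal eligible integer, or n if there is none. -/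
def isLexp (F : Γ → ℕ → ℝ) (Cl : ℝ) (x : Γ) (n R l : ℕ) : Prop :=
  (l ∈ lSet' F Cl x n R ∧ ∀ j ∈ lSet' F Cl x n R, l ≤ j) ∨
  (lSet' F Cl x n R = ∅ ∧ l = n)


/-! ### auxiliary lemmas -/

-- ### basics
lemma w_nonneg (x y : Γ) : 0 ≤ G.w x y := by
  by_cases h : G.adj x y
  · exact (G.w_pos x y h).le
  · exact (G.w_zero x y h).ge

lemma exists_adj (x : Γ) : ∃ y, G.adj x y := by
  haveI := G.inf
  obtain ⟨y, hy⟩ := exists_ne x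
  rcases (G.connected x y).cases_head with h | ⟨z, hz, _⟩
  · exact absurd h.symm hy
  · exact ⟨z, hz⟩

lemma summable_w (hp0 : G.p0cond) (x : Γ) : Summable (fun y => G.w x y) := by
  by_contra h
  obtain ⟨y, hy⟩ := G.exists_adj x
  obtain ⟨p, hp, hP⟩ := hp0
  have hv : G.vtx x = 0 := tsum_eq_zero_of_not_summable h
  have h2 := hP x y hy
  rw [kerP, hv, div_zero] at h2
  exact absurd h2 (not_le.mpr hp)

lemma vtx_pos (hp0 : G.p0cond) (x : Γ) : 0 < G.vtx x := by
  obtain ⟨y, hy⟩ := G.exists_adj x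
  have h1 : G.w x y ≤ G.vtx x := Summable.le_tsum (G.summable_w hp0 x) y (fun j _ => G.w_nonneg x j)
  exact lt_of_lt_of_le (G.w_pos x y hy) h1

lemma vtx_nonneg (x : Γ) : 0 ≤ G.vtx x := tsum_nonneg (fun y => G.w_nonneg x y)

lemma nbr_finite (hp0 : G.p0cond) (x : Γ) : {y | G.adj x y}.Finite := by
  obtain ⟨p, hp, hP⟩ := hp0
  have hvx := G.vtx_pos ⟨p, hp, hP⟩ x
  have hε : 0 < p * G.vtx x := mul_pos hp hvx
  have h2 : ∀ᶠ y in Filter.cofinite, G.w x y < p * G.vtx x :=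
    (G.summable_w ⟨p, hp, hP⟩ x).tendsto_cofinite_zero.eventually_lt_const hε
  refine (Filter.eventually_cofinite.mp h2).subset (fun y hy => ?_)
  have h3 : p ≤ G.kerP x y := hP x y hy
  rw [kerP, le_div_iff₀ hvx] at h3
  simp only [Set.mem_setOf_eq, not_lt]
  linarith

lemma kerP_nonneg (hp0 : G.p0cond) (x y : Γ) : 0 ≤ G.kerP x y :=
  div_nonneg (G.w_nonneg x y) (G.vtx_pos hp0 x).le

lemma kerP_eq_zero (x y : Γ) (h : ¬ G.adj x y) : G.kerP x y = 0 := by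
  rw [kerP, G.w_zero x y h, zero_div]

lemma w_eq_vtx_mul_kerP (hp0 : G.p0cond) (x y : Γ) : G.w x y = G.vtx x * G.kerP x y := by
  rw [kerP, mul_div_cancel₀ _ (G.vtx_pos hp0 x).ne']

lemma vtx_eq_sum (hp0 : G.p0cond) (x : Γ) {s : Finset Γ} (hs : ∀ y, G.adj x y → y ∈ s) :
    G.vtx x = ∑ y ∈ s, G.w x y :=
  tsum_eq_sum (fun y hy => G.w_zero x y (fun h => hy (hs y h)))

-- ### adjN and dist
lemma adjN_zero {x y : Γ} : G.adjN 0 x y ↔ x = y := Iff.rfl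
lemma adjN_succ {n : ℕ} {x y : Γ} : G.adjN (n+1) x y ↔ ∃ z, G.adj x z ∧ G.adjN n z y := Iff.rfl
lemma adjN_one {x y : Γ} : G.adjN 1 x y ↔ G.adj x y := by
  constructor
  · rintro ⟨z, hz, h⟩; rwa [← (G.adjN_zero.mp h)]
  · intro h; exact ⟨y, h, rfl⟩

lemma adjN_compose {m n : ℕ} {x y z : Γ} (h : G.adjN m x y) (h' : G.adjN n y z) :
    G.adjN (m+n) x z := by
  induction m generalizing x with
  | zero => rw [Nat.zero_add]; rw [G.adjN_zero.mp h]; exact h'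
  | succ m ih =>
    obtain ⟨u, hu, h2⟩ := G.adjN_succ.mp h
    rw [Nat.succ_add]
    exact G.adjN_succ.mpr ⟨u, hu, ih h2⟩

lemma adjN_symm {n : ℕ} {x y : Γ} (h : G.adjN n x y) : G.adjN n y x := by
  induction n generalizing x y with
  | zero => exact (G.adjN_zero.mp h).symm
  | succ n ih =>
    obtain ⟨z, hz, h2⟩ := G.adjN_succ.mp h
    exact G.adjN_compose (ih h2) (G.adjN_one.mpr (G.adj_symm x z hz))

lemma exists_adjN (x y : Γ) : ∃ n, G.adjN n x y := by
  induction (G.connected x y) with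
  | refl => exact ⟨0, rfl⟩
  | tail _ h2 ih =>
    obtain ⟨n, hn⟩ := ih
    exact ⟨n+1, G.adjN_compose hn (G.adjN_one.mpr h2)⟩

lemma adjN_dist (x y : Γ) : G.adjN (G.dist x y) x y := Nat.sInf_mem (G.exists_adjN x y)
lemma dist_le {n : ℕ} {x y : Γ} (h : G.adjN n x y) : G.dist x y ≤ n := Nat.sInf_le h
lemma dist_triangle (x y z : Γ) : G.dist x z ≤ G.dist x y + G.dist y z :=
  G.dist_le (G.adjN_compose (G.adjN_dist x y) (G.adjN_dist y z))
lemma dist_self (x : Γ) : G.dist x x = 0 := Nat.le_zero.mp (G.dist_le rfl)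
lemma dist_symm (x y : Γ) : G.dist x y = G.dist y x :=
  le_antisymm (G.dist_le (G.adjN_symm (G.adjN_dist y x))) (G.dist_le (G.adjN_symm (G.adjN_dist x y)))
lemma dist_eq_zero {x y : Γ} (h : G.dist x y = 0) : x = y := by
  have h2 := G.adjN_dist x y; rw [h] at h2; exact h2

lemma adjN_split {n : ℕ} {x y : Γ} (h : G.adjN n x y) :
    ∀ k ≤ n, ∃ z, G.adjN k x z ∧ G.adjN (n-k) z y := by
  intro k hk
  induction k with
  | zero => exact ⟨x, rfl, by simpa using h⟩
  | succ k ih =>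
    obtain ⟨z, h1, h2⟩ := ih (Nat.le_of_succ_le hk)
    have hk' : n - k = (n - (k+1)) + 1 := by omega
    rw [hk'] at h2
    obtain ⟨u, hu, h3⟩ := G.adjN_succ.mp h2
    exact ⟨u, G.adjN_compose h1 (G.adjN_one.mpr hu), h3⟩

lemma closedBall_finite (hp0 : G.p0cond) (x : Γ) (n : ℕ) : {y | G.dist x y ≤ n}.Finite := by
  induction n with
  | zero =>
    refine (Set.finite_singleton x).subset (fun y hy => ?_)
    simp only [Set.mem_setOf_eq, Nat.le_zero] at hy
    simp [(G.dist_eq_zero hy).symm]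
  | succ n ih =>
    have hsub : {y | G.dist x y ≤ n+1} ⊆
        {y | G.dist x y ≤ n} ∪ ⋃ z ∈ {y | G.dist x y ≤ n}, {u | G.adj z u} := by
      intro y hy
      simp only [Set.mem_setOf_eq] at hy
      rcases Nat.lt_or_ge (G.dist x y) (n+1) with h | h
      · exact Or.inl (Nat.lt_succ_iff.mp h)
      · have hd : G.adjN (n+1) x y := by
          have := G.adjN_dist x y
          rwa [le_antisymm hy h] at this
        obtain ⟨z, h1, h2⟩ := G.adjN_split hd n (Nat.le_succ n)
        have h2' : G.adjN 1 z y := by simpa using h2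
        refine Or.inr (Set.mem_biUnion (G.dist_le h1) ?_)
        exact G.adjN_one.mp h2'
    exact (ih.union (ih.biUnion (fun z _ => G.nbr_finite hp0 z))).subset hsub

lemma exists_dist_eq (hp0 : G.p0cond) (x : Γ) (m : ℕ) : ∃ z, G.dist x z = m := by
  haveI := G.inf
  obtain ⟨y, hy⟩ : ∃ y, y ∉ {y | G.dist x y ≤ m} := by
    by_contra h
    push_neg at h
    have h2 : (Set.univ : Set Γ).Finite :=
      (G.closedBall_finite hp0 x m).subset (fun y _ => h y)
    exact Set.infinite_univ h2
  simp only [Set.mem_setOf_eq, not_le] at hy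
  obtain ⟨z, h1, h2⟩ := G.adjN_split (G.adjN_dist x y) m hy.le
  have hd1 : G.dist x z ≤ m := G.dist_le h1
  have hd2 : G.dist z y ≤ G.dist x y - m := G.dist_le h2
  have hd3 := G.dist_triangle x z y
  refine ⟨z, le_antisymm hd1 ?_⟩
  omega

lemma mem_ball {x y : Γ} {r : ℝ} : y ∈ G.ball x r ↔ (G.dist x y : ℝ) < r := Iff.rfl

lemma ball_finite (hp0 : G.p0cond) (x : Γ) (r : ℝ) : (G.ball x r).Finite := by
  refine (G.closedBall_finite hp0 x ⌈r⌉₊).subset (fun y hy => ?_)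
  have : (G.dist x y : ℝ) < r := hy
  exact_mod_cast (this.trans_le (Nat.le_ceil r)).le

lemma ball_subset {x y : Γ} {r s : ℝ} (h : (G.dist y x : ℝ) + r ≤ s) :
    G.ball x r ⊆ G.ball y s := by
  intro u hu
  have h1 : (G.dist x u : ℝ) < r := hu
  have h2 : (G.dist y u : ℕ) ≤ G.dist y x + G.dist x u := G.dist_triangle y x u
  have h3 : (G.dist y u : ℝ) ≤ (G.dist y x : ℝ) + (G.dist x u : ℝ) := by exact_mod_cast h2
  exact lt_of_le_of_lt h3 (by linarith)

lemma ball_mono {x : Γ} {r s : ℝ} (h : r ≤ s) : G.ball x r ⊆ G.ball x s :=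
  fun u hu => lt_of_lt_of_le hu h

lemma self_mem_ball {x : Γ} {r : ℝ} (h : 0 < r) : x ∈ G.ball x r := by
  simp [mem_ball, G.dist_self, h]

-- ### setVol
lemma setVol_eq_sum {A : Set Γ} (hA : A.Finite) : G.setVol A = ∑ y ∈ hA.toFinset, G.vtx y := by
  rw [setVol, tsum_subtype]
  rw [tsum_eq_sum (s := hA.toFinset)
    (fun y hy => Set.indicator_of_notMem (by simpa using hy) _)]
  exact Finset.sum_congr rfl (fun y hy => Set.indicator_of_mem (by simpa using hy) _)

lemma setVol_nonneg (A : Set Γ) : 0 ≤ G.setVol A := tsum_nonneg (fun y => G.vtx_nonneg y)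

lemma setVol_mono {A B : Set Γ} (hB : B.Finite) (h : A ⊆ B) : G.setVol A ≤ G.setVol B := by
  rw [G.setVol_eq_sum (hB.subset h), G.setVol_eq_sum hB]
  refine Finset.sum_le_sum_of_subset_of_nonneg ?_ (fun y _ _ => G.vtx_nonneg y)
  intro y hy
  simp only [Set.Finite.mem_toFinset] at hy ⊢
  exact h hy

lemma setVol_union_disjoint {A B : Set Γ} (hA : A.Finite) (hB : B.Finite)
    (h : Disjoint A B) : G.setVol (A ∪ B) = G.setVol A + G.setVol B := by
  rw [G.setVol_eq_sum (hA.union hB), G.setVol_eq_sum hA, G.setVol_eq_sum hB]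
  rw [← Finset.sum_union (by simp [Finset.disjoint_left, Set.disjoint_left] at h ⊢; exact h)]
  refine Finset.sum_congr ?_ (fun _ _ => rfl)
  ext y; simp

lemma vol_pos (hp0 : G.p0cond) (x : Γ) {r : ℝ} (h : 0 < r) : 0 < G.vol x r := by
  rw [vol, G.setVol_eq_sum (G.ball_finite hp0 x r)]
  refine Finset.sum_pos' (fun y _ => G.vtx_nonneg y) ⟨x, ?_, G.vtx_pos hp0 x⟩
  simp only [Set.Finite.mem_toFinset]
  exact G.self_mem_ball h

lemma vol_mono (hp0 : G.p0cond) {x y : Γ} {r s : ℝ} (h : G.ball x r ⊆ G.ball y s) :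
    G.vol x r ≤ G.vol y s := G.setVol_mono (G.ball_finite hp0 y s) h



-- ### reverse volume doubling
lemma vol_rvd_step (hp0 : G.p0cond) {D : ℝ} (hD : 0 < D)
    (hvd : ∀ (x : Γ) (R : ℝ), 0 < R → G.vol x (2*R) ≤ D * G.vol x R)
    (x : Γ) (S : ℕ) (hS : 0 < S) :
    (1 + D⁻¹*D⁻¹) * G.vol x (S:ℝ) ≤ G.vol x ((3*S : ℕ):ℝ) := by
  obtain ⟨z, hz⟩ := G.exists_dist_eq hp0 x (2*S)
  have hSR : (0:ℝ) < (S:ℝ) := by exact_mod_cast hS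
  have hzx : G.dist z x = 2*S := by rw [← G.dist_symm]; exact hz
  -- B(x,S) and B(z,S) are disjoint
  have hdisj : Disjoint (G.ball x (S:ℝ)) (G.ball z (S:ℝ)) := by
    rw [Set.disjoint_left]
    intro u hu1 hu2
    have h1 : (G.dist x u : ℝ) < S := hu1
    have h2 : (G.dist z u : ℝ) < S := hu2
    have h3 : G.dist x z ≤ G.dist x u + G.dist u z := G.dist_triangle x u z
    rw [hz, G.dist_symm u z] at h3
    have h4 : ((2*S : ℕ):ℝ) ≤ (G.dist x u : ℝ) + (G.dist z u : ℝ) := by exact_mod_cast h3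
    push_cast at h4
    linarith
  -- both inside B(x,3S)
  have hsub1 : G.ball x (S:ℝ) ⊆ G.ball x ((3*S:ℕ):ℝ) := by
    refine G.ball_mono ?_; push_cast; linarith
  have hsub2 : G.ball z (S:ℝ) ⊆ G.ball x ((3*S:ℕ):ℝ) := by
    refine G.ball_subset ?_
    rw [hz]; push_cast; linarith
  have hunion : G.setVol (G.ball x (S:ℝ) ∪ G.ball z (S:ℝ)) ≤ G.vol x ((3*S:ℕ):ℝ) :=
    G.setVol_mono (G.ball_finite hp0 x _) (Set.union_subset hsub1 hsub2)
  rw [G.setVol_union_disjoint (G.ball_finite hp0 x _) (G.ball_finite hp0 z _) hdisj] at hunion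
  -- V(z,S) ≥ D⁻² V(x,S)
  have hxz4 : G.ball x (S:ℝ) ⊆ G.ball z (4*(S:ℝ)) := by
    refine G.ball_subset ?_; rw [hzx]; push_cast; linarith
  have hv1 : G.vol x (S:ℝ) ≤ G.vol z (4*(S:ℝ)) := G.vol_mono hp0 hxz4
  have hv2 : G.vol z (4*(S:ℝ)) ≤ D * G.vol z (2*(S:ℝ)) := by
    have := hvd z (2*(S:ℝ)) (by linarith)
    calc G.vol z (4*(S:ℝ)) = G.vol z (2*(2*(S:ℝ))) := by ring_nf
    _ ≤ D * G.vol z (2*(S:ℝ)) := this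
  have hv3 : G.vol z (2*(S:ℝ)) ≤ D * G.vol z (S:ℝ) := hvd z (S:ℝ) hSR
  have hv4 : G.vol x (S:ℝ) ≤ D * (D * G.vol z (S:ℝ)) := by
    calc G.vol x (S:ℝ) ≤ D * G.vol z (2*(S:ℝ)) := hv1.trans hv2
    _ ≤ D * (D * G.vol z (S:ℝ)) := by
        exact mul_le_mul_of_nonneg_left hv3 hD.le
  have hv5 : D⁻¹ * D⁻¹ * G.vol x (S:ℝ) ≤ G.vol z (S:ℝ) := by
    calc D⁻¹ * D⁻¹ * G.vol x (S:ℝ) ≤ D⁻¹ * D⁻¹ * (D * (D * G.vol z (S:ℝ))) := by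
          refine mul_le_mul_of_nonneg_left hv4 ?_
          positivity
    _ = G.vol z (S:ℝ) := by field_simp
  have := hunion
  rw [show G.setVol (G.ball x (S:ℝ)) = G.vol x (S:ℝ) from rfl,
      show G.setVol (G.ball z (S:ℝ)) = G.vol z (S:ℝ) from rfl] at this
  nlinarith [G.vol_pos hp0 x hSR]

lemma vol_rvd (hp0 : G.p0cond) {D : ℝ} (hD : 0 < D)
    (hvd : ∀ (x : Γ) (R : ℝ), 0 < R → G.vol x (2*R) ≤ D * G.vol x R)
    (k : ℕ) (x : Γ) (S : ℕ) (hS : 0 < S) :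
    (1 + D⁻¹*D⁻¹)^k * G.vol x (S:ℝ) ≤ G.vol x ((3^k * S : ℕ):ℝ) := by
  induction k with
  | zero => simp
  | succ k ih =>
    have hstep := G.vol_rvd_step hp0 hD hvd x (3^k * S) (by positivity)
    have hε : (0:ℝ) < 1 + D⁻¹*D⁻¹ := by positivity
    calc (1 + D⁻¹*D⁻¹)^(k+1) * G.vol x (S:ℝ)
        = (1 + D⁻¹*D⁻¹) * ((1 + D⁻¹*D⁻¹)^k * G.vol x (S:ℝ)) := by ring
    _ ≤ (1 + D⁻¹*D⁻¹) * G.vol x ((3^k * S : ℕ):ℝ) := by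
        exact mul_le_mul_of_nonneg_left ih hε.le
    _ ≤ G.vol x ((3*(3^k*S) : ℕ):ℝ) := hstep
    _ = G.vol x ((3^(k+1) * S : ℕ):ℝ) := by ring_nf

-- ### inner product machinery
def ip (f g : Γ → ℝ) : ℝ := ∑' y, f y * g y * G.vtx y

lemma ip_eq_sum {f : Γ → ℝ} (g : Γ → ℝ) {s : Finset Γ} (hf : ∀ y ∉ s, f y = 0) :
    G.ip f g = ∑ y ∈ s, f y * g y * G.vtx y :=
  tsum_eq_sum (fun y hy => by rw [hf y hy]; ring)

lemma ip_eq_sum_right (f : Γ → ℝ) {g : Γ → ℝ} {s : Finset Γ} (hg : ∀ y ∉ s, g y = 0) :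
    G.ip f g = ∑ y ∈ s, f y * g y * G.vtx y :=
  tsum_eq_sum (fun y hy => by rw [hg y hy]; ring)

lemma ip_comm (f g : Γ → ℝ) : G.ip f g = G.ip g f := tsum_congr (fun y => by ring)

lemma ip_self_nonneg (f : Γ → ℝ) : 0 ≤ G.ip f f :=
  tsum_nonneg (fun y => mul_nonneg (mul_self_nonneg _) (G.vtx_nonneg y))

lemma Pop_eq_sum {f : Γ → ℝ} {s : Finset Γ} (hf : ∀ z ∉ s, f z = 0) (y : Γ) :
    G.Pop f y = ∑ z ∈ s, G.kerP y z * f z :=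
  tsum_eq_sum (fun z hz => by rw [hf z hz, mul_zero])

lemma Pop_eq_sum_ker (hp0 : G.p0cond) (f : Γ → ℝ) (y : Γ) :
    G.Pop f y = ∑ v ∈ (G.nbr_finite hp0 y).toFinset, G.kerP y v * f v :=
  tsum_eq_sum (fun v hv => by
    rw [G.kerP_eq_zero y v (by simpa using hv), zero_mul])

lemma ip_pop (hp0 : G.p0cond) {f g : Γ → ℝ} {s : Finset Γ}
    (hf : ∀ y ∉ s, f y = 0) (hg : ∀ y ∉ s, g y = 0) :
    G.ip (G.Pop f) g = G.ip f (G.Pop g) := by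
  have key : ∀ (a b : Γ → ℝ), (∀ y ∉ s, a y = 0) → (∀ y ∉ s, b y = 0) →
      G.ip (G.Pop a) b = ∑ y ∈ s, ∑ z ∈ s, G.w y z * a z * b y := by
    intro a b ha hb
    rw [G.ip_eq_sum_right (G.Pop a) hb]
    refine Finset.sum_congr rfl (fun y _ => ?_)
    rw [G.Pop_eq_sum ha y, Finset.sum_mul, Finset.sum_mul]
    refine Finset.sum_congr rfl (fun z _ => ?_)
    rw [G.w_eq_vtx_mul_kerP hp0 y z]
    ring
  rw [key f g hf hg, G.ip_comm, key g f hg hf]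
  conv_rhs => rw [Finset.sum_comm]
  refine Finset.sum_congr rfl (fun y _ => Finset.sum_congr rfl (fun z _ => ?_))
  rw [G.w_symm y z]
  ring

lemma ip_cs {f g : Γ → ℝ} {s : Finset Γ}
    (hf : ∀ y ∉ s, f y = 0) (hg : ∀ y ∉ s, g y = 0) :
    (G.ip f g)^2 ≤ G.ip f f * G.ip g g := by
  have hv : ∀ y, Real.sqrt (G.vtx y) * Real.sqrt (G.vtx y) = G.vtx y :=
    fun y => Real.mul_self_sqrt (G.vtx_nonneg y)
  have h := Finset.sum_mul_sq_le_sq_mul_sq s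
    (fun y => f y * Real.sqrt (G.vtx y)) (fun y => g y * Real.sqrt (G.vtx y))
  have e1 : ∑ y ∈ s, (f y * Real.sqrt (G.vtx y)) * (g y * Real.sqrt (G.vtx y))
      = ∑ y ∈ s, f y * g y * G.vtx y :=
    Finset.sum_congr rfl (fun y _ => by
      rw [show (f y * Real.sqrt (G.vtx y)) * (g y * Real.sqrt (G.vtx y))
        = f y * g y * (Real.sqrt (G.vtx y) * Real.sqrt (G.vtx y)) from by ring, hv y])
  have e2 : ∑ y ∈ s, (f y * Real.sqrt (G.vtx y))^2 = ∑ y ∈ s, f y * f y * G.vtx y :=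
    Finset.sum_congr rfl (fun y _ => by
      rw [show (f y * Real.sqrt (G.vtx y))^2
        = f y * f y * (Real.sqrt (G.vtx y) * Real.sqrt (G.vtx y)) from by ring, hv y])
  have e3 : ∑ y ∈ s, (g y * Real.sqrt (G.vtx y))^2 = ∑ y ∈ s, g y * g y * G.vtx y :=
    Finset.sum_congr rfl (fun y _ => by
      rw [show (g y * Real.sqrt (G.vtx y))^2
        = g y * g y * (Real.sqrt (G.vtx y) * Real.sqrt (G.vtx y)) from by ring, hv y])
  rw [e1, e2, e3] at h
  rw [G.ip_eq_sum g hf, G.ip_eq_sum f hf, G.ip_eq_sum_right g hg]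
  exact h

lemma rowsum_gg (hp0 : G.p0cond) {g : Γ → ℝ} {s : Finset Γ}
    (hnb : ∀ y, g y ≠ 0 → ∀ z, G.adj y z → z ∈ s) (y : Γ) :
    ∑ z ∈ s, G.w y z * g y * g y = g y * g y * G.vtx y := by
  by_cases h : g y = 0
  · simp [h]
  · rw [← Finset.sum_mul, ← Finset.sum_mul, ← G.vtx_eq_sum hp0 y (hnb y h)]
    ring

lemma dform_eq (hp0 : G.p0cond) {g : Γ → ℝ} {s0 : Finset Γ} (hg : ∀ y ∉ s0, g y = 0) :
    G.dform g = G.ip g g - G.ip g (G.Pop g) := by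
  classical
  set s : Finset Γ := s0 ∪ s0.biUnion (fun z => (G.nbr_finite hp0 z).toFinset) with hs
  have hgs : ∀ y ∉ s, g y = 0 := fun y hy => hg y (fun h => hy (Finset.mem_union_left _ h))
  have hmem : ∀ y, g y ≠ 0 → y ∈ s0 := fun y hy => by
    by_contra h; exact hy (hg y h)
  have hnb : ∀ y, g y ≠ 0 → ∀ z, G.adj y z → z ∈ s := by
    intro y hy z hz
    refine Finset.mem_union_right _ (Finset.mem_biUnion.mpr ⟨y, hmem y hy, ?_⟩)
    simpa using hz
  have hsupp : ∀ p : Γ × Γ, p ∉ s ×ˢ s → G.w p.1 p.2 * (g p.1 - g p.2)^2 = 0 := by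
    intro p hp
    by_cases hadj : G.adj p.1 p.2
    · by_cases h1 : g p.1 = 0
      · by_cases h2 : g p.2 = 0
        · rw [h1, h2]; ring
        · exact absurd (Finset.mem_product.mpr
            ⟨hnb p.2 h2 p.1 (G.adj_symm _ _ hadj), Finset.mem_union_left _ (hmem p.2 h2)⟩) hp
      · exact absurd (Finset.mem_product.mpr
          ⟨Finset.mem_union_left _ (hmem p.1 h1), hnb p.1 h1 p.2 hadj⟩) hp
    · rw [G.w_zero _ _ hadj]; ring
  rw [dform, tsum_eq_sum hsupp, Finset.sum_product]
  have expand : ∀ y ∈ s, ∑ z ∈ s, G.w y z * (g y - g z)^2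
      = (∑ z ∈ s, G.w y z * g y * g y) - 2 * (∑ z ∈ s, G.w y z * g y * g z)
        + ∑ z ∈ s, G.w y z * g z * g z := by
    intro y _
    have e : ∀ z ∈ s, G.w y z * (g y - g z)^2
        = (G.w y z * g y * g y - 2 * (G.w y z * g y * g z)) + G.w y z * g z * g z :=
      fun z _ => by ring
    rw [Finset.sum_congr rfl e, Finset.sum_add_distrib, Finset.sum_sub_distrib,
      ← Finset.mul_sum]
  rw [Finset.sum_congr rfl expand]
  rw [Finset.sum_add_distrib, Finset.sum_sub_distrib]
  have T1 : ∑ y ∈ s, ∑ z ∈ s, G.w y z * g y * g y = G.ip g g := by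
    rw [G.ip_eq_sum g hgs]
    exact Finset.sum_congr rfl (fun y _ => G.rowsum_gg hp0 hnb y)
  have T3 : ∑ y ∈ s, ∑ z ∈ s, G.w y z * g z * g z = G.ip g g := by
    rw [Finset.sum_comm, G.ip_eq_sum g hgs]
    refine Finset.sum_congr rfl (fun z _ => ?_)
    rw [← G.rowsum_gg hp0 hnb z (s := s)]
    exact Finset.sum_congr rfl (fun y _ => by rw [G.w_symm y z])
  have T2 : ∑ y ∈ s, 2 * ∑ z ∈ s, G.w y z * g y * g z = 2 * G.ip g (G.Pop g) := by
    rw [← Finset.mul_sum]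
    congr 1
    rw [G.ip_eq_sum (G.Pop g) hgs]
    refine Finset.sum_congr rfl (fun y _ => ?_)
    rw [G.Pop_eq_sum hgs y, Finset.mul_sum, Finset.sum_mul]
    refine Finset.sum_congr rfl (fun z _ => ?_)
    rw [G.w_eq_vtx_mul_kerP hp0 y z]
    ring
  rw [T1, T3, T2]
  ring

-- ### transition kernel machinery
lemma dist_adj {x y : Γ} (h : G.adj x y) : G.dist x y ≤ 1 := G.dist_le (G.adjN_one.mpr h)

lemma transP_zero' (y z : Γ) : G.transP 0 y z = if y = z then 1 else 0 := by
  simp [transP, killedP]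

lemma transP_succ' (n : ℕ) (y z : Γ) :
    G.transP (n+1) y z = ∑' u, G.kerP y u * G.transP n u z := by
  simp [transP, killedP]

lemma transP_nonneg (hp0 : G.p0cond) : ∀ (n : ℕ) (y z : Γ), 0 ≤ G.transP n y z := by
  intro n
  induction n with
  | zero => intro y z; rw [transP_zero']; split <;> norm_num
  | succ n ih =>
    intro y z
    rw [transP_succ']
    exact tsum_nonneg (fun u => mul_nonneg (G.kerP_nonneg hp0 y u) (ih u z))

lemma transP_far (hp0 : G.p0cond) : ∀ (n : ℕ) (y z : Γ), n < G.dist y z → G.transP n y z = 0 := by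
  intro n
  induction n with
  | zero =>
    intro y z h
    rw [transP_zero', if_neg]
    intro he
    rw [he, G.dist_self] at h
    exact Nat.lt_irrefl 0 h
  | succ n ih =>
    intro y z h
    rw [transP_succ']
    have hz : ∀ u, G.kerP y u * G.transP n u z = 0 := by
      intro u
      by_cases hadj : G.adj y u
      · have h1 := G.dist_triangle y u z
        have h2 := G.dist_adj hadj
        rw [ih u z (by omega), mul_zero]
      · rw [G.kerP_eq_zero y u hadj, zero_mul]
    rw [show (fun u => G.kerP y u * G.transP n u z) = (fun _ => (0:ℝ)) from funext hz,
      tsum_zero]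

lemma transP_one' (hp0 : G.p0cond) (y z : Γ) : G.transP 1 y z = G.kerP y z := by
  rw [transP_succ']
  rw [tsum_eq_sum (s := {z}) (f := fun u => G.kerP y u * G.transP 0 u z) ?_]
  · simp [transP_zero']
  · intro u hu
    simp only [Finset.mem_singleton] at hu
    show G.kerP y u * G.transP 0 u z = 0
    rw [transP_zero', if_neg hu, mul_zero]

lemma transP_ck (hp0 : G.p0cond) (m n : ℕ) (z : Γ) : ∀ (y : Γ),
    G.transP (m+n) y z = ∑' u, G.transP m y u * G.transP n u z := by
  induction m with
  | zero =>
    intro y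
    rw [Nat.zero_add]
    rw [tsum_eq_sum (s := {y}) (f := fun u => G.transP 0 y u * G.transP n u z) ?_]
    · simp [transP_zero']
    · intro u hu
      simp only [Finset.mem_singleton] at hu
      show G.transP 0 y u * G.transP n u z = 0
      rw [transP_zero', if_neg (fun h => hu h.symm), zero_mul]
  | succ m ih =>
    intro y
    rw [show m+1+n = (m+n)+1 from by omega, transP_succ']
    have hnb := G.nbr_finite hp0 y
    rw [tsum_eq_sum (s := hnb.toFinset)
      (fun v hv => by rw [G.kerP_eq_zero y v (by simpa using hv), zero_mul])]
    set T := (G.closedBall_finite hp0 y (m+1)).toFinset with hT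
    have hTv : ∀ v ∈ hnb.toFinset, G.transP (m+n) v z
        = ∑ u ∈ T, G.transP m v u * G.transP n u z := by
      intro v hv
      rw [ih v]
      refine tsum_eq_sum (fun u hu => ?_)
      have hadj : G.adj y v := by simpa using hv
      have hyu : ¬ G.dist y u ≤ m+1 := by simpa [hT] using hu
      have h3 := G.dist_triangle y v u
      have h4 := G.dist_adj hadj
      have h5 := G.dist_triangle v y u
      have h6 : G.dist v y ≤ 1 := by rw [G.dist_symm]; exact h4
      rw [G.transP_far hp0 m v u (by omega), zero_mul]
    rw [Finset.sum_congr rfl (fun v hv => by rw [hTv v hv, Finset.mul_sum])]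
    rw [Finset.sum_comm]
    rw [tsum_eq_sum (s := T)
      (fun u hu => by
        rw [G.transP_far hp0 (m+1) y u (by simpa [hT, not_le] using hu), zero_mul])]
    refine Finset.sum_congr rfl (fun u _ => ?_)
    rw [transP_succ' (n := m)]
    rw [tsum_eq_sum (s := hnb.toFinset)
      (fun v hv => by rw [G.kerP_eq_zero y v (by simpa using hv), zero_mul]),
      Finset.sum_mul]
    exact Finset.sum_congr rfl (fun v _ => by ring)

lemma transP_ck_sum (hp0 : G.p0cond) (m n : ℕ) (y z : Γ) {t : Finset Γ}
    (ht : ∀ u, G.dist y u ≤ m → u ∈ t) :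
    G.transP (m+n) y z = ∑ u ∈ t, G.transP m y u * G.transP n u z := by
  rw [G.transP_ck hp0 m n z y]
  refine tsum_eq_sum (fun u hu => ?_)
  have : ¬ G.dist y u ≤ m := fun h => hu (ht u h)
  rw [G.transP_far hp0 m y u (by omega), zero_mul]

lemma transP_symm (hp0 : G.p0cond) : ∀ (n : ℕ) (y z : Γ),
    G.vtx y * G.transP n y z = G.vtx z * G.transP n z y := by
  intro n
  induction n with
  | zero =>
    intro y z
    by_cases h : y = z
    · rw [h]
    · rw [transP_zero', transP_zero', if_neg h, if_neg (Ne.symm h), mul_zero, mul_zero]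
  | succ n ih =>
    intro y z
    set t := (G.nbr_finite hp0 y).toFinset ∪ (G.closedBall_finite hp0 z n).toFinset with ht
    have hL : G.vtx y * G.transP (n+1) y z = ∑ u ∈ t, G.w y u * G.transP n u z := by
      rw [transP_succ', tsum_eq_sum (s := t) (fun u hu => ?_), Finset.mul_sum]
      · exact Finset.sum_congr rfl (fun u _ => by rw [G.w_eq_vtx_mul_kerP hp0 y u]; ring)
      · have hna : ¬ G.adj y u := fun h => hu (Finset.mem_union_left _ (by simpa using h))
        rw [G.kerP_eq_zero y u hna, zero_mul]
    have hR : G.vtx z * G.transP (n+1) z y = ∑ u ∈ t, G.w y u * G.transP n u z := by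
      have hck : G.transP (n+1) z y = ∑ u ∈ t, G.transP n z u * G.kerP u y := by
        have h1 := G.transP_ck_sum hp0 n 1 z y (t := t)
          (fun u hu => Finset.mem_union_right _ (by simpa using hu))
        rw [h1]
        exact Finset.sum_congr rfl (fun u _ => by rw [G.transP_one' hp0])
      rw [hck, Finset.mul_sum]
      refine Finset.sum_congr rfl (fun u _ => ?_)
      calc G.vtx z * (G.transP n z u * G.kerP u y)
          = (G.vtx z * G.transP n z u) * G.kerP u y := by ring
      _ = (G.vtx u * G.transP n u z) * G.kerP u y := by rw [ih z u]
      _ = (G.vtx u * G.kerP u y) * G.transP n u z := by ring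
      _ = G.w y u * G.transP n u z := by rw [← G.w_eq_vtx_mul_kerP hp0 u y, G.w_symm]
    rw [hL, hR]

lemma transP_cs (hp0 : G.p0cond) (n : ℕ) (y z : Γ) :
    G.transP (n+n) y z ≤ G.vtx z *
      (Real.sqrt (G.transP (n+n) y y / G.vtx y) * Real.sqrt (G.transP (n+n) z z / G.vtx z)) := by
  classical
  set t := (G.closedBall_finite hp0 y n).toFinset ∪ (G.closedBall_finite hp0 z n).toFinset with ht
  have hty : ∀ u, G.dist y u ≤ n → u ∈ t := fun u hu =>
    Finset.mem_union_left _ (by simpa [ht] using hu)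
  have htz : ∀ u, G.dist z u ≤ n → u ∈ t := fun u hu =>
    Finset.mem_union_right _ (by simpa [ht] using hu)
  have hvpos := G.vtx_pos hp0
  have hsq : ∀ u, Real.sqrt (G.vtx u) * Real.sqrt (G.vtx u) = G.vtx u :=
    fun u => Real.mul_self_sqrt (G.vtx_nonneg u)
  set α : Γ → ℝ := fun u => G.transP n y u / Real.sqrt (G.vtx u) with hα
  set γ : Γ → ℝ := fun u => G.transP n z u / Real.sqrt (G.vtx u) with hγ
  have hsqrtpos : ∀ u, 0 < Real.sqrt (G.vtx u) := fun u => Real.sqrt_pos.mpr (hvpos u)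
  have e0 : G.transP (n+n) y z = ∑ u ∈ t, G.transP n y u * G.transP n u z :=
    G.transP_ck_sum hp0 n n y z hty
  have e1 : ∀ u ∈ t, G.transP n y u * G.transP n u z = G.vtx z * (α u * γ u) := by
    intro u _
    have h2 : G.transP n u z = G.vtx z * G.transP n z u / G.vtx u := by
      rw [eq_div_iff (hvpos u).ne']
      have := G.transP_symm hp0 n u z
      linarith
    rw [hα, hγ]
    simp only []
    rw [div_mul_div_comm, hsq u, h2]
    ring
  have hα2 : ∑ u ∈ t, α u ^ 2 = G.transP (n+n) y y / G.vtx y := by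
    have e2 : ∀ u ∈ t, α u ^ 2 = G.transP n y u * G.transP n u y / G.vtx y := by
      intro u _
      have h2 : G.transP n u y = G.vtx y * G.transP n y u / G.vtx u := by
        rw [eq_div_iff (hvpos u).ne']
        have := G.transP_symm hp0 n u y
        linarith
      rw [hα]
      simp only []
      rw [div_pow, Real.sq_sqrt (G.vtx_nonneg u), h2]
      have hr : G.transP n y u * (G.vtx y * G.transP n y u / G.vtx u) / G.vtx y
          = (G.vtx y / G.vtx y) * (G.transP n y u ^ 2 / G.vtx u) := by ring
      rw [hr, div_self (hvpos y).ne', one_mul]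
    rw [Finset.sum_congr rfl e2, ← Finset.sum_div, ← G.transP_ck_sum hp0 n n y y hty]
  have hγ2 : ∑ u ∈ t, γ u ^ 2 = G.transP (n+n) z z / G.vtx z := by
    have e2 : ∀ u ∈ t, γ u ^ 2 = G.transP n z u * G.transP n u z / G.vtx z := by
      intro u _
      have h2 : G.transP n u z = G.vtx z * G.transP n z u / G.vtx u := by
        rw [eq_div_iff (hvpos u).ne']
        have := G.transP_symm hp0 n u z
        linarith
      rw [hγ]
      simp only []
      rw [div_pow, Real.sq_sqrt (G.vtx_nonneg u), h2]
      have hr : G.transP n z u * (G.vtx z * G.transP n z u / G.vtx u) / G.vtx z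
          = (G.vtx z / G.vtx z) * (G.transP n z u ^ 2 / G.vtx u) := by ring
      rw [hr, div_self (hvpos z).ne', one_mul]
    rw [Finset.sum_congr rfl e2, ← Finset.sum_div, ← G.transP_ck_sum hp0 n n z z htz]
  have hαγ0 : 0 ≤ ∑ u ∈ t, α u * γ u :=
    Finset.sum_nonneg (fun u _ => mul_nonneg
      (div_nonneg (G.transP_nonneg hp0 n y u) (Real.sqrt_nonneg _))
      (div_nonneg (G.transP_nonneg hp0 n z u) (Real.sqrt_nonneg _)))
  have hcs := Finset.sum_mul_sq_le_sq_mul_sq t α γ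
  have hx : (∑ u ∈ t, α u * γ u)
      ≤ Real.sqrt (G.transP (n+n) y y / G.vtx y) * Real.sqrt (G.transP (n+n) z z / G.vtx z) := by
    rw [← Real.sqrt_mul (div_nonneg (G.transP_nonneg hp0 _ y y) (hvpos y).le)]
    rw [← Real.sqrt_sq hαγ0]
    refine Real.sqrt_le_sqrt ?_
    rw [← hα2, ← hγ2]
    exact hcs
  calc G.transP (n+n) y z = ∑ u ∈ t, G.vtx z * (α u * γ u) := by
        rw [e0]; exact Finset.sum_congr rfl e1
  _ = G.vtx z * ∑ u ∈ t, α u * γ u := by rw [← Finset.mul_sum]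
  _ ≤ G.vtx z * (Real.sqrt (G.transP (n+n) y y / G.vtx y)
        * Real.sqrt (G.transP (n+n) z z / G.vtx z)) :=
      mul_le_mul_of_nonneg_left hx (G.vtx_nonneg z)

-- ### the main energy lower bound
lemma energy_lower_main (hp0 : G.p0cond) {sg : Finset Γ} {g : Γ → ℝ}
    (hgs : ∀ y ∉ sg, g y = 0) (hg0 : ∀ y, 0 ≤ g y) (n : ℕ) (K : ℝ)
    (hK : ∀ y ∈ sg, ∀ z ∈ sg, G.transP (n+n) y z ≤ K * G.vtx z) :
    G.ip g g - K * (∑ y ∈ sg, g y * G.vtx y)^2 ≤ (2*(n:ℝ)) * G.dform g := by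
  classical
  set u : ℕ → Γ → ℝ := fun j y => ∑' z, G.transP j y z * g z with hu
  set S : ℕ → Finset Γ := fun j =>
    sg.biUnion (fun z => (G.closedBall_finite hp0 z j).toFinset) with hS
  have hSmono : ∀ j k, j ≤ k → ∀ y, y ∈ S j → y ∈ S k := by
    intro j k hjk y hy
    simp only [hS, Finset.mem_biUnion, Set.Finite.mem_toFinset, Set.mem_setOf_eq] at hy ⊢
    obtain ⟨z, hz1, hz2⟩ := hy
    exact ⟨z, hz1, hz2.trans hjk⟩
  have hsg_sub : ∀ j, ∀ y ∈ sg, y ∈ S j := by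
    intro j y hy
    simp only [hS, Finset.mem_biUnion, Set.Finite.mem_toFinset, Set.mem_setOf_eq]
    exact ⟨y, hy, by simp [G.dist_self]⟩
  have husupp : ∀ j y, y ∉ S j → u j y = 0 := by
    intro j y hy
    have hz : ∀ z, G.transP j y z * g z = 0 := by
      intro z
      by_cases hgz : g z = 0
      · rw [hgz, mul_zero]
      · have hzs : z ∈ sg := by by_contra h; exact hgz (hgs z h)
        have hfar : j < G.dist y z := by
          by_contra h
          push_neg at h
          refine hy ?_
          simp only [hS, Finset.mem_biUnion, Set.Finite.mem_toFinset, Set.mem_setOf_eq]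
          exact ⟨z, hzs, by rwa [G.dist_symm]⟩
        rw [G.transP_far hp0 j y z hfar, zero_mul]
    calc u j y = ∑' z, (0:ℝ) := tsum_congr hz
    _ = 0 := tsum_zero
  have hueq : ∀ j y, u j y = ∑ z ∈ sg, G.transP j y z * g z :=
    fun j y => tsum_eq_sum (fun z hz => by rw [hgs z hz, mul_zero])
  have hu0 : u 0 = g := by
    funext y
    rw [hueq]
    simp only [G.transP_zero', ite_mul, one_mul, zero_mul, Finset.sum_ite_eq]
    by_cases h : y ∈ sg
    · rw [if_pos h]
    · rw [if_neg h, hgs y h]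
  have husucc : ∀ j, u (j+1) = G.Pop (u j) := by
    intro j
    funext y
    rw [hueq (j+1) y]
    have hnbr := G.nbr_finite hp0 y
    have e1 : ∀ z ∈ sg, G.transP (j+1) y z * g z
        = ∑ v ∈ hnbr.toFinset, G.kerP y v * G.transP j v z * g z := by
      intro z _
      rw [G.transP_succ', tsum_eq_sum (s := hnbr.toFinset)
        (fun v hv => by rw [G.kerP_eq_zero y v (by simpa using hv), zero_mul]),
        Finset.sum_mul]
    rw [Finset.sum_congr rfl e1, Finset.sum_comm, G.Pop_eq_sum_ker hp0 (u j) y]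
    refine Finset.sum_congr rfl (fun v _ => ?_)
    rw [hueq j v, Finset.mul_sum]
    exact Finset.sum_congr rfl (fun z _ => by ring)
  set a : ℕ → ℝ := fun j => G.ip (u j) (u j) with ha
  have ha_nonneg : ∀ j, 0 ≤ a j := fun j => G.ip_self_nonneg (u j)
  have hstep : ∀ j k, G.ip (u (j+1)) (u k) = G.ip (u j) (u (k+1)) := by
    intro j k
    rw [husucc j, husucc k]
    exact G.ip_pop hp0 (s := S (j+k))
      (fun y hy => husupp j y (fun h => hy (hSmono j (j+k) (by omega) y h)))
      (fun y hy => husupp k y (fun h => hy (hSmono k (j+k) (by omega) y h)))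
  have hshift : ∀ m j k, G.ip (u (j+m)) (u k) = G.ip (u j) (u (k+m)) := by
    intro m
    induction m with
    | zero => intro j k; rfl
    | succ m ih =>
      intro j k
      have e1 : j + (m+1) = (j+m) + 1 := by omega
      rw [e1, hstep (j+m) k, ih j (k+1)]
      have e2 : k + 1 + m = k + (m+1) := by omega
      rw [e2]
  have ha_rec : ∀ j, a (j+1) = G.ip (u j) (u (j+2)) := fun j => hstep j (j+1)
  have hcs : ∀ j, (a (j+1))^2 ≤ a j * a (j+2) := by
    intro j
    rw [ha_rec j]
    exact G.ip_cs (s := S (j+2))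
      (fun y hy => husupp j y (fun h => hy (hSmono j (j+2) (by omega) y h)))
      (fun y hy => husupp (j+2) y hy)
  have hconv : ∀ j, a (j+1) - a (j+2) ≤ a j - a (j+1) := by
    intro j
    have h1 : a (j+1) ≤ Real.sqrt (a j) * Real.sqrt (a (j+2)) := by
      rw [← Real.sqrt_mul (ha_nonneg j)]
      rw [← Real.sqrt_sq (ha_nonneg (j+1))]
      exact Real.sqrt_le_sqrt (hcs j)
    nlinarith [Real.sq_sqrt (ha_nonneg j), Real.sq_sqrt (ha_nonneg (j+2)),
      sq_nonneg (Real.sqrt (a j) - Real.sqrt (a (j+2)))]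
  have hd0 : ∀ j, a j - a (j+1) ≤ a 0 - a 1 := by
    intro j
    induction j with
    | zero => exact le_refl _
    | succ j ih => exact (hconv j).trans ih
  have htel : ∀ m : ℕ, a 0 - a m ≤ (m:ℝ) * (a 0 - a 1) := by
    intro m
    induction m with
    | zero => simp
    | succ m ih =>
      have := hd0 m
      push_cast
      push_cast at ih
      nlinarith
  have hu1 : u 1 = G.Pop g := by rw [show (1:ℕ) = 0 + 1 from rfl, husucc 0, hu0]
  have hgS1 : ∀ y ∉ S 1, g y = 0 := by
    intro y hy
    by_contra h
    exact hy (hSmono 0 1 (by omega) y (by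
      have : y ∈ sg := by by_contra hh; exact h (hgs y hh)
      exact hsg_sub 0 y this))
  have hPgS1 : ∀ y ∉ S 1, G.Pop g y = 0 := by
    intro y hy
    rw [← hu1]
    exact husupp 1 y hy
  have hd0E : a 0 - a 1 ≤ 2 * G.dform g := by
    have hq0 : 0 ≤ G.ip (fun y => g y - G.Pop g y) (fun y => g y - G.Pop g y) :=
      G.ip_self_nonneg _
    have hq : G.ip (fun y => g y - G.Pop g y) (fun y => g y - G.Pop g y)
        = G.ip g g - 2 * G.ip g (G.Pop g) + G.ip (G.Pop g) (G.Pop g) := by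
      have h1 : ∀ y ∉ S 1, g y - G.Pop g y = 0 :=
        fun y hy => by rw [hgS1 y hy, hPgS1 y hy, sub_zero]
      rw [G.ip_eq_sum _ h1, G.ip_eq_sum g hgS1, G.ip_eq_sum (G.Pop g) hgS1,
        G.ip_eq_sum (G.Pop g) hPgS1]
      rw [Finset.sum_congr rfl (fun y (_ : y ∈ S 1) =>
        (by ring : (g y - G.Pop g y) * (g y - G.Pop g y) * G.vtx y
          = (g y * g y * G.vtx y - 2 * (g y * G.Pop g y * G.vtx y))
            + G.Pop g y * G.Pop g y * G.vtx y))]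
      rw [Finset.sum_add_distrib, Finset.sum_sub_distrib, ← Finset.mul_sum]
    have ha0 : a 0 = G.ip g g := by rw [ha]; simp only []; rw [hu0]
    have ha1 : a 1 = G.ip (G.Pop g) (G.Pop g) := by rw [ha]; simp only []; rw [hu1]
    have hsa : G.ip (G.Pop g) g = G.ip g (G.Pop g) := G.ip_comm _ _
    have hdf : G.dform g = G.ip g g - G.ip g (G.Pop g) := G.dform_eq hp0 hgs
    rw [ha0, ha1, hdf]
    linarith [hq0, hq]
  have han : a n ≤ K * (∑ y ∈ sg, g y * G.vtx y)^2 := by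
    have h1 : a n = G.ip (u 0) (u (n+n)) := by
      have := hshift n 0 n
      rw [Nat.zero_add] at this
      exact this
    rw [h1, hu0]
    have h2 : G.ip g (u (n+n)) = ∑ y ∈ sg, ∑ z ∈ sg,
        g y * (G.transP (n+n) y z * g z) * G.vtx y := by
      rw [G.ip_eq_sum (u (n+n)) hgs]
      refine Finset.sum_congr rfl (fun y _ => ?_)
      rw [hueq (n+n) y, Finset.mul_sum, Finset.sum_mul]
    rw [h2]
    have key : ∀ y ∈ sg, ∀ z ∈ sg, g y * (G.transP (n+n) y z * g z) * G.vtx y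
        ≤ K * ((g y * G.vtx y) * (g z * G.vtx z)) := by
      intro y hy z hz
      have hnn : (0:ℝ) ≤ g y * g z * G.vtx y :=
        mul_nonneg (mul_nonneg (hg0 y) (hg0 z)) (G.vtx_nonneg y)
      have h3 := mul_le_mul_of_nonneg_left (hK y hy z hz) hnn
      calc g y * (G.transP (n+n) y z * g z) * G.vtx y
          = g y * g z * G.vtx y * G.transP (n+n) y z := by ring
      _ ≤ g y * g z * G.vtx y * (K * G.vtx z) := h3
      _ = K * ((g y * G.vtx y) * (g z * G.vtx z)) := by ring
    calc ∑ y ∈ sg, ∑ z ∈ sg, g y * (G.transP (n+n) y z * g z) * G.vtx y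
        ≤ ∑ y ∈ sg, ∑ z ∈ sg, K * ((g y * G.vtx y) * (g z * G.vtx z)) :=
          Finset.sum_le_sum (fun y hy => Finset.sum_le_sum (fun z hz => key y hy z hz))
    _ = K * (∑ y ∈ sg, g y * G.vtx y)^2 := by
        rw [sq, Finset.sum_mul_sum, Finset.mul_sum]
        exact Finset.sum_congr rfl (fun y _ => by rw [Finset.mul_sum])
  have ha0 : a 0 = G.ip g g := by rw [ha]; simp only []; rw [hu0]
  have hmain := htel n
  have hmul : (n:ℝ) * (a 0 - a 1) ≤ (n:ℝ) * (2 * G.dform g) :=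
    mul_le_mul_of_nonneg_left hd0E (Nat.cast_nonneg n)
  calc G.ip g g - K * (∑ y ∈ sg, g y * G.vtx y)^2
      ≤ G.ip g g - a n := by linarith [han]
  _ = a 0 - a n := by rw [ha0]
  _ ≤ (n:ℝ) * (a 0 - a 1) := hmain
  _ ≤ (n:ℝ) * (2 * G.dform g) := hmul
  _ = (2*(n:ℝ)) * G.dform g := by ring

-- ### clamping
lemma pair_supp (hp0 : G.p0cond) {f : Γ → ℝ} {s0 : Finset Γ} (hf : ∀ y ∉ s0, f y = 0) :
    ∀ p : Γ × Γ, p ∉ (s0 ∪ s0.biUnion (fun z => (G.nbr_finite hp0 z).toFinset)) ×ˢ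
      (s0 ∪ s0.biUnion (fun z => (G.nbr_finite hp0 z).toFinset)) →
      G.w p.1 p.2 * (f p.1 - f p.2)^2 = 0 := by
  intro p hp
  set s : Finset Γ := s0 ∪ s0.biUnion (fun z => (G.nbr_finite hp0 z).toFinset) with hs
  have hmem : ∀ y, f y ≠ 0 → y ∈ s0 := fun y hy => by
    by_contra h; exact hy (hf y h)
  have hnb : ∀ y, f y ≠ 0 → ∀ z, G.adj y z → z ∈ s := by
    intro y hy z hz
    refine Finset.mem_union_right _ (Finset.mem_biUnion.mpr ⟨y, hmem y hy, ?_⟩)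
    simpa using hz
  by_cases hadj : G.adj p.1 p.2
  · by_cases h1 : f p.1 = 0
    · by_cases h2 : f p.2 = 0
      · rw [h1, h2]; ring
      · exact absurd (Finset.mem_product.mpr
          ⟨hnb p.2 h2 p.1 (G.adj_symm _ _ hadj), Finset.mem_union_left _ (hmem p.2 h2)⟩) hp
    · exact absurd (Finset.mem_product.mpr
        ⟨Finset.mem_union_left _ (hmem p.1 h1), hnb p.1 h1 p.2 hadj⟩) hp
  · rw [G.w_zero _ _ hadj]; ring

lemma dform_clamp (hp0 : G.p0cond) {f : Γ → ℝ} {s0 : Finset Γ} (hf : ∀ y ∉ s0, f y = 0) :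
    G.dform (fun y => max 0 (min 1 (f y))) ≤ G.dform f := by
  classical
  set g : Γ → ℝ := fun y => max 0 (min 1 (f y)) with hgdef
  have hgz : ∀ y ∉ s0, g y = 0 := fun y h => by
    rw [hgdef]; simp [hf y h]
  have habs : ∀ y z : Γ, (g y - g z)^2 ≤ (f y - f z)^2 := by
    intro y z
    have h1 : |min 1 (f y) - min 1 (f z)| ≤ |f y - f z| := by
      have := abs_min_sub_min_le_max (1:ℝ) (f y) 1 (f z)
      simpa using this
    have h2 : |g y - g z| ≤ |min 1 (f y) - min 1 (f z)| := by
      rw [hgdef]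
      simp only []
      rw [max_comm 0 (min 1 (f y)), max_comm 0 (min 1 (f z))]
      exact abs_max_sub_max_le_abs _ _ 0
    have h3 : |g y - g z| ≤ |f y - f z| := h2.trans h1
    calc (g y - g z)^2 = |g y - g z|^2 := (sq_abs _).symm
    _ ≤ |f y - f z|^2 := pow_le_pow_left₀ (abs_nonneg _) h3 2
    _ = (f y - f z)^2 := sq_abs _
  rw [dform, dform]
  refine mul_le_mul_of_nonneg_left ?_ (by norm_num)
  refine Summable.tsum_le_tsum
    (fun p => mul_le_mul_of_nonneg_left (habs p.1 p.2) (G.w_nonneg _ _))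
    (summable_of_ne_finset_zero (G.pair_supp hp0 hgz))
    (summable_of_ne_finset_zero (G.pair_supp hp0 hf))

-- ### W0 helpers
lemma F_mono {F : Γ → ℕ → ℝ} (hmono : ∀ (x : Γ) (R : ℕ), F x R + 1 ≤ F x (R+1)) (x : Γ) :
    ∀ {r r' : ℕ}, r ≤ r' → F x r ≤ F x r' := by
  intro r r' h
  induction r' with
  | zero => rw [Nat.le_zero.mp h]
  | succ r' ih =>
    rcases Nat.lt_or_ge r (r'+1) with h2 | h2
    · have h3 := hmono x r'
      have h4 := ih (by omega)
      linarith
    · rw [le_antisymm h h2]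

lemma F_ge_self {F : Γ → ℕ → ℝ} (hmono : ∀ (x : Γ) (R : ℕ), F x R + 1 ≤ F x (R+1))
    (h0 : ∀ x : Γ, 0 ≤ F x 0) (x : Γ) : ∀ m : ℕ, (m:ℝ) ≤ F x m := by
  intro m
  induction m with
  | zero => simpa using h0 x
  | succ m ih =>
    have := hmono x m
    push_cast
    linarith

end WGraph


set_option maxHeartbeats 1000000 in
/-- under (p0) and (VD), if F ∈ W₀ and DUE(F) holds, then
ρ(x,R,2R)·v(x,R,2R) ≤ C·F(x,2R). -/
theorem statement14 {Γ : Type*} (G : WGraph Γ) (hp0 : G.p0cond) (hVD : G.VD)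
    (F : Γ → ℕ → ℝ) (hF : G.memW0 F) (hDUE : G.DUE F) :
    ∃ C > (0:ℝ), ∀ (x : Γ) (R : ℕ), 0 < R →
      G.resA x (R:ℝ) (2*(R:ℝ)) * G.volA x (R:ℝ) (2*(R:ℝ)) ≤ C * F x (2*R) := by
  classical
  obtain ⟨C₀, hC₀, hdue⟩ := hDUE
  obtain ⟨D, hD0, hvd⟩ := hVD
  obtain ⟨⟨β, hβ, β', hβ', cF, hcF, CF, hCF, hreg⟩, ⟨c₂, hc₂, hlow⟩, hmono⟩ := hF
  haveI := G.inf
  -- D ≥ 1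
  have hD1 : 1 ≤ D := by
    obtain ⟨x0⟩ : Nonempty Γ := inferInstance
    have h1 : G.vol x0 1 ≤ G.vol x0 (2*1) := G.vol_mono hp0 (G.ball_mono (by norm_num))
    have h2 : G.vol x0 (2*1) ≤ D * G.vol x0 1 := hvd x0 1 one_pos
    have h3 : 0 < G.vol x0 1 := G.vol_pos hp0 x0 one_pos
    nlinarith
  have hDi : 0 < D⁻¹*D⁻¹ := by positivity
  -- choose k with (1+D⁻²)^k ≥ 2C₀D²
  obtain ⟨k0, hk0⟩ := pow_unbounded_of_one_lt (2*C₀*D*D)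
    (show (1:ℝ) < 1 + D⁻¹*D⁻¹ by linarith)
  set k := k0 + 1 with hk
  have hone : (1:ℝ) ≤ 1 + D⁻¹*D⁻¹ := by linarith
  have hkk : 2*C₀*D*D ≤ (1 + D⁻¹*D⁻¹)^k := by
    calc 2*C₀*D*D ≤ (1 + D⁻¹*D⁻¹)^k0 := hk0.le
    _ ≤ (1 + D⁻¹*D⁻¹)^k := pow_le_pow_right₀ hone (by omega)
  set M := (1 + D⁻¹*D⁻¹)^k * D⁻¹ with hM
  have hMpos : 0 < M := by positivity
  have hM2 : 2*C₀*D ≤ M := by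
    rw [hM]
    calc 2*C₀*D = (2*C₀*D*D) * D⁻¹ := by field_simp
    _ ≤ (1 + D⁻¹*D⁻¹)^k * D⁻¹ := mul_le_mul_of_nonneg_right hkk (by positivity)
  set A := CF * ((3:ℝ)^k) ^ β with hA
  have hApos : 0 < A := by
    have h1 : (0:ℝ) < ((3:ℝ)^k) ^ β := Real.rpow_pos_of_pos (by positivity) β
    positivity
  set B := A + 1/(4*c₂) with hB
  have hBpos : 0 < B := by positivity
  refine ⟨4*B*D, by positivity, ?_⟩
  intro x R hR
  have hR1 : (1:ℝ) ≤ (R:ℝ) := by exact_mod_cast hR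
  have hFpos : 0 < F x (2*R) := by
    have h1 := hlow x (2*R)
    have h2 : (0:ℝ) < c₂ * ((2*R:ℕ):ℝ)^2 := by
      have : (0:ℝ) < ((2*R:ℕ):ℝ) := by push_cast; linarith
      positivity
    linarith
  have hF4 : 4*c₂ ≤ F x (2*R) := by
    have h1 := hlow x (2*R)
    have h2 : (4:ℝ) ≤ ((2*R:ℕ):ℝ)^2 := by push_cast; nlinarith
    nlinarith
  set n := ⌊A * F x (2*R)⌋₊ + 1 with hn
  have hnpos : 0 < n := Nat.succ_pos _
  have hnR : (0:ℝ) < (n:ℝ) := by exact_mod_cast hnpos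
  have hnlow : A * F x (2*R) < (n:ℝ) := by
    rw [hn]; push_cast; exact Nat.lt_floor_add_one _
  have hnup : (n:ℝ) ≤ B * F x (2*R) := by
    rw [hn, hB]
    push_cast
    have h1 : (⌊A * F x (2*R)⌋₊ : ℝ) ≤ A * F x (2*R) := Nat.floor_le (by positivity)
    have h2 : (1:ℝ) ≤ (1/(4*c₂)) * F x (2*R) := by
      rw [div_mul_eq_mul_div, le_div_iff₀ (by positivity)]
      linarith
    nlinarith
  -- volumes
  have hball2 := G.ball_finite hp0 x (2*(R:ℝ))
  set t2 := hball2.toFinset with ht2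
  have hV2 : G.vol x (2*(R:ℝ)) = ∑ y ∈ t2, G.vtx y := G.setVol_eq_sum hball2
  have hV2pos : 0 < G.vol x (2*(R:ℝ)) := G.vol_pos hp0 x (by linarith)
  have hVRpos : 0 < G.vol x (R:ℝ) := G.vol_pos hp0 x (by linarith)
  have hVD2 : G.vol x (2*(R:ℝ)) ≤ D * G.vol x (R:ℝ) := hvd x (R:ℝ) (by linarith)
  set K := C₀ / (M * G.vol x (2*(R:ℝ))) with hK
  have hKpos : 0 < K := by positivity
  have h0F : ∀ y : Γ, 0 ≤ F y 0 := by
    intro y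
    have := hlow y 0
    simpa using this
  -- DUE-based kernel bound on the ball
  have hkyy : ∀ y ∈ t2, G.transP (2*n) y y / G.vtx y ≤ K := by
    intro y hy
    have hyb : (G.dist x y : ℝ) < 2*(R:ℝ) := by
      rw [ht2, Set.Finite.mem_toFinset] at hy
      exact hy
    -- radius ρR
    set ρR := 3^k * (2*R) with hρ
    have h3k : 3 ≤ 3^k := by
      calc 3 = 3^1 := (pow_one 3).symm
      _ ≤ 3^k := Nat.pow_le_pow_right (by norm_num) (by omega)
    have h2Rρ : 2*R < ρR := by
      rw [hρ]
      have h1 : 3*(2*R) ≤ 3^k*(2*R) := Nat.mul_le_mul_right _ h3k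
      omega
    -- F y ρR ≤ A F x 2R
    have hdyx : G.dist y x < ρR := by
      have h1 : (G.dist y x : ℝ) < 2*(R:ℝ) := by rw [G.dist_symm y x]; exact hyb
      have h2 : ((G.dist y x : ℕ):ℝ) < ((2*R : ℕ):ℝ) := by push_cast; linarith
      have h3 : G.dist y x < 2*R := Nat.cast_lt.mp h2
      omega
    have hFy2Rpos : 0 < F y (2*R) := by
      have h1 := hlow y (2*R)
      have h2 : (0:ℝ) < c₂ * ((2*R:ℕ):ℝ)^2 := by
        have : (0:ℝ) < ((2*R:ℕ):ℝ) := by push_cast; linarith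
        positivity
      linarith
    have hFρpos : 0 < F x (2*R) := hFpos
    have hupper := (hreg y x ρR (2*R) (by omega) h2Rρ hdyx).2
    have hcast : ((ρR:ℕ):ℝ)/((2*R:ℕ):ℝ) = (3:ℝ)^k := by
      rw [hρ]
      push_cast
      rw [mul_div_assoc, div_self (by push_cast; linarith : ((2:ℝ)*(R:ℝ)) ≠ 0), mul_one]
    rw [hcast] at hupper
    have hFyρ : F y ρR ≤ A * F x (2*R) := by
      rw [div_le_iff₀ hFpos] at hupper
      rw [hA]
      linarith
    -- invF' ≥ ρR
    have hinv : ρR ≤ WGraph.invF' F y (2*n) := by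
      by_contra h
      push_neg at h
      have hmem : ((2*n:ℕ):ℝ) ≤ F y (WGraph.invF' F y (2*n)) :=
        Nat.sInf_mem (⟨2*n, WGraph.F_ge_self hmono h0F y (2*n)⟩ :
          Set.Nonempty {r : ℕ | ((2*n:ℕ):ℝ) ≤ F y r})
      have h2 : F y (WGraph.invF' F y (2*n)) ≤ F y ρR := WGraph.F_mono hmono y (by omega)
      have h3 : ((2*n:ℕ):ℝ) ≤ A * F x (2*R) := by linarith
      have h4 : (n:ℝ) ≤ ((2*n:ℕ):ℝ) := by push_cast; linarith
      linarith
    -- volume lower bound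
    have hvolyρ : (1 + D⁻¹*D⁻¹)^k * G.vol y ((2*R:ℕ):ℝ) ≤ G.vol y ((ρR:ℕ):ℝ) := by
      rw [hρ]
      exact G.vol_rvd hp0 hD0 hvd k y (2*R) (by omega)
    have hcast2 : ((2*R:ℕ):ℝ) = 2*(R:ℝ) := by push_cast; ring
    have hvy2R : D⁻¹ * G.vol x (2*(R:ℝ)) ≤ G.vol y (2*(R:ℝ)) := by
      have hsub : G.ball x (2*(R:ℝ)) ⊆ G.ball y (2*(2*(R:ℝ))) := by
        refine G.ball_subset ?_
        have : (G.dist y x : ℝ) < 2*(R:ℝ) := by rw [G.dist_symm y x]; exact hyb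
        linarith
      have h1 : G.vol x (2*(R:ℝ)) ≤ G.vol y (2*(2*(R:ℝ))) := G.vol_mono hp0 hsub
      have h2 : G.vol y (2*(2*(R:ℝ))) ≤ D * G.vol y (2*(R:ℝ)) := hvd y (2*(R:ℝ)) (by linarith)
      have h3 : G.vol x (2*(R:ℝ)) ≤ D * G.vol y (2*(R:ℝ)) := h1.trans h2
      calc D⁻¹ * G.vol x (2*(R:ℝ)) ≤ D⁻¹ * (D * G.vol y (2*(R:ℝ))) :=
            mul_le_mul_of_nonneg_left h3 (by positivity)
      _ = G.vol y (2*(R:ℝ)) := by field_simp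
    have hvolbig : M * G.vol x (2*(R:ℝ)) ≤ G.vol y ((WGraph.invF' F y (2*n) : ℕ):ℝ) := by
      have h1 : G.vol y ((ρR:ℕ):ℝ) ≤ G.vol y ((WGraph.invF' F y (2*n) : ℕ):ℝ) := by
        refine G.vol_mono hp0 (G.ball_mono ?_)
        exact_mod_cast hinv
      have h2 : (1 + D⁻¹*D⁻¹)^k * (D⁻¹ * G.vol x (2*(R:ℝ))) ≤ (1 + D⁻¹*D⁻¹)^k * G.vol y (2*(R:ℝ)) :=
        mul_le_mul_of_nonneg_left hvy2R (by positivity)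
      rw [hcast2] at hvolyρ
      calc M * G.vol x (2*(R:ℝ)) = (1 + D⁻¹*D⁻¹)^k * (D⁻¹ * G.vol x (2*(R:ℝ))) := by
            rw [hM]; ring
      _ ≤ (1 + D⁻¹*D⁻¹)^k * G.vol y (2*(R:ℝ)) := h2
      _ ≤ G.vol y ((ρR:ℕ):ℝ) := hvolyρ
      _ ≤ G.vol y ((WGraph.invF' F y (2*n) : ℕ):ℝ) := h1
    have hdue' := hdue y (2*n) (by omega)
    have hhk : G.hk (2*n) y y = G.transP (2*n) y y / G.vtx y := rfl
    rw [hhk] at hdue'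
    refine hdue'.trans ?_
    rw [hK]
    refine div_le_div_of_nonneg_left hC₀.le (by positivity) hvolbig
  have hKbound : ∀ y ∈ t2, ∀ z ∈ t2, G.transP (n+n) y z ≤ K * G.vtx z := by
    intro y hy z hz
    have hcs := G.transP_cs hp0 n y z
    have h2n : n + n = 2*n := by omega
    rw [h2n] at hcs
    have hyK := hkyy y hy
    have hzK := hkyy z hz
    have hynn : 0 ≤ G.transP (2*n) y y / G.vtx y :=
      div_nonneg (G.transP_nonneg hp0 _ y y) (G.vtx_nonneg y)
    have hznn : 0 ≤ G.transP (2*n) z z / G.vtx z :=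
      div_nonneg (G.transP_nonneg hp0 _ z z) (G.vtx_nonneg z)
    have hsq : Real.sqrt (G.transP (2*n) y y / G.vtx y) * Real.sqrt (G.transP (2*n) z z / G.vtx z)
        ≤ K := by
      calc Real.sqrt (G.transP (2*n) y y / G.vtx y) * Real.sqrt (G.transP (2*n) z z / G.vtx z)
          ≤ Real.sqrt K * Real.sqrt K :=
            mul_le_mul (Real.sqrt_le_sqrt hyK) (Real.sqrt_le_sqrt hzK)
              (Real.sqrt_nonneg _) (Real.sqrt_nonneg _)
      _ = K := Real.mul_self_sqrt hKpos.le
    rw [h2n]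
    calc G.transP (2*n) y z ≤ G.vtx z * (Real.sqrt (G.transP (2*n) y y / G.vtx y)
          * Real.sqrt (G.transP (2*n) z z / G.vtx z)) := hcs
    _ ≤ G.vtx z * K := mul_le_mul_of_nonneg_left hsq (G.vtx_nonneg z)
    _ = K * G.vtx z := by ring
  -- the resistance set
  set b := G.vol x (R:ℝ) / (4 * (B * F x (2*R))) with hb
  have hbpos : 0 < b := by positivity
  have hball1 := G.ball_finite hp0 x (R:ℝ)
  set t1 := hball1.toFinset with ht1
  have ht12 : t1 ⊆ t2 := by
    intro y hy
    rw [ht1, Set.Finite.mem_toFinset] at hy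
    rw [ht2, Set.Finite.mem_toFinset]
    exact G.ball_mono (by linarith) hy
  have hlb : ∀ e ∈ {e | ∃ f : Γ → ℝ, (∀ y ∈ G.ball x (R:ℝ), f y = 1) ∧
      (∀ y ∈ (G.ball x (2*(R:ℝ)))ᶜ, f y = 0) ∧ e = G.dform f}, b ≤ e := by
    rintro e ⟨f, hf1, hf0, rfl⟩
    set g : Γ → ℝ := fun y => max 0 (min 1 (f y)) with hgdef
    have hfs : ∀ y ∉ t2, f y = 0 := by
      intro y hy
      refine hf0 y ?_
      rw [ht2, Set.Finite.mem_toFinset] at hy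
      exact hy
    have hgs : ∀ y ∉ t2, g y = 0 := fun y hy => by
      rw [hgdef]; simp [hfs y hy]
    have hg0 : ∀ y, 0 ≤ g y := fun y => le_max_left 0 _
    have hg1 : ∀ y, g y ≤ 1 := fun y => max_le zero_le_one (min_le_left _ _)
    have hgb : ∀ y ∈ G.ball x (R:ℝ), g y = 1 := fun y hy => by
      rw [hgdef]; simp [hf1 y hy]
    have hmain := G.energy_lower_main hp0 hgs hg0 n K hKbound
    have hipgg : G.vol x (R:ℝ) ≤ G.ip g g := by
      have hVR : G.vol x (R:ℝ) = ∑ y ∈ t1, G.vtx y := G.setVol_eq_sum hball1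
      rw [G.ip_eq_sum g hgs, hVR]
      have h1 : ∀ y ∈ t1, G.vtx y = g y * g y * G.vtx y := by
        intro y hy
        rw [ht1, Set.Finite.mem_toFinset] at hy
        rw [hgb y hy]; ring
      rw [Finset.sum_congr rfl h1]
      refine Finset.sum_le_sum_of_subset_of_nonneg ht12 ?_
      intro y _ _
      exact mul_nonneg (mul_nonneg (hg0 y) (hg0 y)) (G.vtx_nonneg y)
    have hsum : ∑ y ∈ t2, g y * G.vtx y ≤ G.vol x (2*(R:ℝ)) := by
      rw [hV2]
      refine Finset.sum_le_sum (fun y _ => ?_)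
      exact mul_le_of_le_one_left (G.vtx_nonneg y) (hg1 y)
    have hsum0 : 0 ≤ ∑ y ∈ t2, g y * G.vtx y :=
      Finset.sum_nonneg (fun y _ => mul_nonneg (hg0 y) (G.vtx_nonneg y))
    have hKs : K * (∑ y ∈ t2, g y * G.vtx y)^2 ≤ G.vol x (R:ℝ) / 2 := by
      have h1 : K * (∑ y ∈ t2, g y * G.vtx y)^2 ≤ K * (G.vol x (2*(R:ℝ)))^2 :=
        mul_le_mul_of_nonneg_left (pow_le_pow_left₀ hsum0 hsum 2) hKpos.le
      have h2 : K * (G.vol x (2*(R:ℝ)))^2 = C₀ * G.vol x (2*(R:ℝ)) / M := by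
        rw [hK]; field_simp
      have h3 : C₀ * G.vol x (2*(R:ℝ)) / M ≤ G.vol x (R:ℝ) / 2 := by
        rw [div_le_div_iff₀ hMpos (by norm_num)]
        nlinarith [mul_nonneg (sub_nonneg.mpr hM2) hVRpos.le,
          mul_nonneg hC₀.le (sub_nonneg.mpr hVD2)]
      linarith
    have hdg : G.vol x (R:ℝ) / 2 ≤ (2*(n:ℝ)) * G.dform g := by linarith
    have hdfg : b ≤ G.dform g := by
      have h6 : b ≤ G.vol x (R:ℝ) / (4*(n:ℝ)) := by
        rw [hb]
        refine div_le_div_of_nonneg_left hVRpos.le (by positivity) ?_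
        nlinarith
      have h7 : G.vol x (R:ℝ) / (4*(n:ℝ)) ≤ G.dform g := by
        rw [div_le_iff₀ (by positivity)]
        nlinarith
      linarith
    have hclamp := G.dform_clamp hp0 hfs
    rw [hgdef] at hdfg
    linarith
  have hSne : Set.Nonempty {e | ∃ f : Γ → ℝ, (∀ y ∈ G.ball x (R:ℝ), f y = 1) ∧
      (∀ y ∈ (G.ball x (2*(R:ℝ)))ᶜ, f y = 0) ∧ e = G.dform f} := by
    refine ⟨G.dform (fun y => if y ∈ G.ball x (2*(R:ℝ)) then 1 else 0),
      fun y => if y ∈ G.ball x (2*(R:ℝ)) then 1 else 0, ?_, ?_, rfl⟩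
    · intro y hy
      show (if y ∈ G.ball x (2*(R:ℝ)) then (1:ℝ) else 0) = 1
      rw [if_pos (G.ball_mono (by linarith) hy)]
    · intro y hy
      show (if y ∈ G.ball x (2*(R:ℝ)) then (1:ℝ) else 0) = 0
      rw [if_neg hy]
  have hinf : b ≤ sInf {e | ∃ f : Γ → ℝ, (∀ y ∈ G.ball x (R:ℝ), f y = 1) ∧
      (∀ y ∈ (G.ball x (2*(R:ℝ)))ᶜ, f y = 0) ∧ e = G.dform f} := le_csInf hSne hlb
  have hres : G.resA x (R:ℝ) (2*(R:ℝ)) ≤ b⁻¹ := by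
    show (sInf {e | ∃ f : Γ → ℝ, (∀ y ∈ G.ball x (R:ℝ), f y = 1) ∧
      (∀ y ∈ (G.ball x (2*(R:ℝ)))ᶜ, f y = 0) ∧ e = G.dform f})⁻¹ ≤ b⁻¹
    exact inv_anti₀ hbpos hinf
  have hvolA0 : 0 ≤ G.volA x (R:ℝ) (2*(R:ℝ)) :=
    sub_nonneg.mpr (G.vol_mono hp0 (G.ball_mono (by linarith)))
  have hvolAD : G.volA x (R:ℝ) (2*(R:ℝ)) ≤ D * G.vol x (R:ℝ) := by
    show G.vol x (2*(R:ℝ)) - G.vol x (R:ℝ) ≤ D * G.vol x (R:ℝ)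
    linarith
  have hresnn : 0 ≤ b⁻¹ := by positivity
  calc G.resA x (R:ℝ) (2*(R:ℝ)) * G.volA x (R:ℝ) (2*(R:ℝ))
      ≤ b⁻¹ * G.volA x (R:ℝ) (2*(R:ℝ)) := mul_le_mul_of_nonneg_right hres hvolA0
  _ ≤ b⁻¹ * (D * G.vol x (R:ℝ)) := mul_le_mul_of_nonneg_left hvolAD hresnn
  _ = 4*B*D * F x (2*R) := by
      rw [hb]
      field_simp
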